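/- arXiv:2110.03832 — 5 statements merged into one kernel-verified Lean document; each statement's English description precedes it below -/
import Mathlib

section
/- Let c_D, c_E : ℝ × ℝ → ℝ be jointly continuous, where the first argument of each function is the link's own flow and the second is the counterpart link's flow. Assume each is differentiable in its second argument with jointly continuous partial derivative, and that the symmetry condition ∂₂c_E(b, a) = ∂₂c_D(a, b) holds for all a, b ∈ ℝ. Define F(x,y) = ∫₀^{x} c_D(s, 0) ds + ∫₀^{y} c_E(s, x) ds. Then F is differentiable, with ∂F/∂x(x,y) = c_D(x, y) and ∂F/∂y(x,y) = c_E(y, x). That is, the gradient of the decomposed Beckmann objective equals the cost vector even in the presence of symmetric link interactions. -/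
open MeasureTheory intervalIntegral Set

/-- Joint differentiability of `(x,y) ↦ ∫₀^y f x s ds` when `f` is continuous with
continuous partial derivative `g` in the first variable. -/
lemma beckmann_aux (f g : ℝ → ℝ → ℝ)
    (hf : Continuous fun p : ℝ × ℝ => f p.1 p.2)
    (hg : Continuous fun p : ℝ × ℝ => g p.1 p.2)
    (hderiv : ∀ x s : ℝ, HasDerivAt (fun x => f x s) (g x s) x)
    (x₀ y₀ : ℝ) :
    HasFDerivAt (fun q : ℝ × ℝ => ∫ s in (0:ℝ)..q.2, f q.1 s)
      ((∫ s in (0:ℝ)..y₀, g x₀ s) • ContinuousLinearMap.fst ℝ ℝ ℝ +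
        (f x₀ y₀) • ContinuousLinearMap.snd ℝ ℝ ℝ) (x₀, y₀) := by
  have hfx : ∀ x : ℝ, Continuous fun s => f x s := fun x =>
    hf.comp (continuous_const.prodMk continuous_id)
  have hgx : ∀ x : ℝ, Continuous fun s => g x s := fun x =>
    hg.comp (continuous_const.prodMk continuous_id)
  -- Step A: derivative of `x ↦ ∫₀^{y₀} f x s ds` at `x₀`.
  obtain ⟨C, hC⟩ := ((isCompact_Icc (a := x₀ - 1) (b := x₀ + 1)).prod
      (isCompact_uIcc (a := (0:ℝ)) (b := y₀))).exists_bound_of_continuousOn hg.continuousOn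
  have hA : HasDerivAt (fun x => ∫ s in (0:ℝ)..y₀, f x s) (∫ s in (0:ℝ)..y₀, g x₀ s) x₀ := by
    refine (intervalIntegral.hasDerivAt_integral_of_dominated_loc_of_deriv_le
      (s := Metric.ball x₀ 1) (bound := fun _ => C) (Metric.ball_mem_nhds x₀ one_pos)
      (Filter.Eventually.of_forall fun x => (hfx x).aestronglyMeasurable)
      ((hfx x₀).intervalIntegrable _ _)
      (hgx x₀).aestronglyMeasurable
      (Filter.Eventually.of_forall fun t ht x hx => ?_)
      (intervalIntegrable_const)
      (Filter.Eventually.of_forall fun t ht x hx => hderiv x t)).2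
    refine hC (x, t) ⟨?_, uIoc_subset_uIcc ht⟩
    have : |x - x₀| < 1 := by simpa [Real.dist_eq] using hx
    constructor <;> linarith [abs_lt.1 this |>.1, abs_lt.1 this |>.2]
  have hB : HasFDerivAt (fun q : ℝ × ℝ => ∫ s in (0:ℝ)..y₀, f q.1 s)
      ((∫ s in (0:ℝ)..y₀, g x₀ s) • ContinuousLinearMap.fst ℝ ℝ ℝ) (x₀, y₀) :=
    (hA.comp_hasFDerivAt (f := Prod.fst) (x₀, y₀) (hasFDerivAt_fst (𝕜 := ℝ)) :)
  -- Step C: derivative of `q ↦ ∫_{y₀}^{q.2} f q.1 s ds`.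
  have hR : HasFDerivAt (fun q : ℝ × ℝ => ∫ s in y₀..q.2, f q.1 s)
      ((f x₀ y₀) • ContinuousLinearMap.snd ℝ ℝ ℝ) (x₀, y₀) := by
    rw [hasFDerivAt_iff_isLittleO_nhds_zero, Asymptotics.isLittleO_iff]
    intro c hc
    obtain ⟨δ, hδpos, hδ⟩ := Metric.continuousAt_iff.1 hf.continuousAt c hc
    filter_upwards [Metric.ball_mem_nhds (0 : ℝ × ℝ) hδpos] with h hh
    have hnorm : ‖h‖ < δ := by simpa using hh
    have key : ∀ s ∈ Set.uIoc y₀ (y₀ + h.2), ‖f (x₀ + h.1) s - f x₀ y₀‖ ≤ c := by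
      intro s hs
      have h1 : |s - y₀| ≤ |h.2| := by
        have := abs_sub_left_of_mem_uIcc (uIoc_subset_uIcc hs)
        simpa using this
      have hd : dist ((x₀ + h.1, s) : ℝ × ℝ) (x₀, y₀) < δ := by
        rw [Prod.dist_eq]
        refine max_lt ?_ ?_
        · simp only [Real.dist_eq, add_sub_cancel_left]
          exact lt_of_le_of_lt (norm_fst_le h) hnorm
        · simp only [Real.dist_eq]
          exact lt_of_le_of_lt (h1.trans (norm_snd_le h)) hnorm
      exact (le_of_lt (by simpa [Real.dist_eq] using hδ hd))
    have hint : IntervalIntegrable (fun s => f (x₀ + h.1) s) volume y₀ (y₀ + h.2) :=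
      (hfx _).intervalIntegrable _ _
    have heq : (∫ s in y₀..(y₀ + h.2), f (x₀ + h.1) s) - f x₀ y₀ * h.2
        = ∫ s in y₀..(y₀ + h.2), (f (x₀ + h.1) s - f x₀ y₀) := by
      rw [intervalIntegral.integral_sub hint intervalIntegrable_const,
        intervalIntegral.integral_const]
      simp [smul_eq_mul]
      ring
    calc ‖(∫ s in y₀..((x₀, y₀) + h).2, f ((x₀, y₀) + h).1 s) -
            (∫ s in y₀..(x₀, y₀).2, f (x₀, y₀).1 s) -
            ((f x₀ y₀) • ContinuousLinearMap.snd ℝ ℝ ℝ) h‖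
        = ‖∫ s in y₀..(y₀ + h.2), (f (x₀ + h.1) s - f x₀ y₀)‖ := by
          simp only [Prod.fst_add, Prod.snd_add, intervalIntegral.integral_same,
            ContinuousLinearMap.smul_apply, ContinuousLinearMap.coe_snd', smul_eq_mul, sub_zero]
          rw [← heq]
      _ ≤ c * |y₀ + h.2 - y₀| := intervalIntegral.norm_integral_le_of_norm_le_const key
      _ ≤ c * ‖h‖ := by
          rw [add_sub_cancel_left]
          exact mul_le_mul_of_nonneg_left (norm_snd_le h) hc.le
  have hsplit : (fun q : ℝ × ℝ => ∫ s in (0:ℝ)..q.2, f q.1 s)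
      = fun q : ℝ × ℝ => (∫ s in (0:ℝ)..y₀, f q.1 s) + ∫ s in y₀..q.2, f q.1 s := by
    funext q
    rw [intervalIntegral.integral_add_adjacent_intervals ((hfx _).intervalIntegrable _ _)
      ((hfx _).intervalIntegrable _ _)]
  rw [hsplit]
  exact hB.add hR

/-- With symmetric link interactions (`∂₂c_E(b,a) = ∂₂c_D(a,b)`), the decomposed
Beckmann objective `F(x,y) = ∫₀^x c_D(s,0) ds + ∫₀^y c_E(s,x) ds` is differentiable,
with gradient equal to the cost vector: `∂F/∂x = c_D(x,y)` and `∂F/∂y = c_E(y,x)`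
(each cost takes the link's own flow first and its counterpart's flow second). -/
theorem beckmann_gradient_with_symmetric_interactions
    (cD cE dD dE : ℝ → ℝ → ℝ)
    (hcD : Continuous fun p : ℝ × ℝ => cD p.1 p.2)
    (hcE : Continuous fun p : ℝ × ℝ => cE p.1 p.2)
    (hdD : ∀ a b : ℝ, HasDerivAt (fun t => cD a t) (dD a b) b)
    (hdE : ∀ a b : ℝ, HasDerivAt (fun t => cE a t) (dE a b) b)
    (hdDc : Continuous fun p : ℝ × ℝ => dD p.1 p.2)
    (hdEc : Continuous fun p : ℝ × ℝ => dE p.1 p.2)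
    (hsym : ∀ a b : ℝ, dE b a = dD a b)
    (F : ℝ × ℝ → ℝ)
    (hF : ∀ p : ℝ × ℝ, F p =
      (∫ s in (0:ℝ)..p.1, cD s 0) + (∫ s in (0:ℝ)..p.2, cE s p.1)) :
    ∀ p : ℝ × ℝ, HasFDerivAt F
      ((cD p.1 p.2) • (ContinuousLinearMap.fst ℝ ℝ ℝ) +
        (cE p.2 p.1) • (ContinuousLinearMap.snd ℝ ℝ ℝ)) p := by
  rintro ⟨x, y⟩
  have hFeq : F = fun p : ℝ × ℝ =>
      (∫ s in (0:ℝ)..p.1, cD s 0) + (∫ s in (0:ℝ)..p.2, cE s p.1) := funext hF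
  -- first summand
  have hA : HasDerivAt (fun t => ∫ s in (0:ℝ)..t, cD s 0) (cD x 0) x :=
    ((hcD.comp (continuous_id.prodMk continuous_const)).integral_hasStrictDerivAt 0 x).hasDerivAt
  have hA' : HasFDerivAt (fun p : ℝ × ℝ => ∫ s in (0:ℝ)..p.1, cD s 0)
      ((cD x 0) • ContinuousLinearMap.fst ℝ ℝ ℝ) (x, y) :=
    (hA.comp_hasFDerivAt (f := Prod.fst) (x, y) (hasFDerivAt_fst (𝕜 := ℝ)) :)
  -- second summand via the auxiliary lemma (with swapped arguments)
  have hG : HasFDerivAt (fun q : ℝ × ℝ => ∫ s in (0:ℝ)..q.2, cE s q.1)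
      ((∫ s in (0:ℝ)..y, dE s x) • ContinuousLinearMap.fst ℝ ℝ ℝ +
        (cE y x) • ContinuousLinearMap.snd ℝ ℝ ℝ) (x, y) :=
    beckmann_aux (fun a b => cE b a) (fun a b => dE b a)
      (hcE.comp continuous_swap) (hdEc.comp continuous_swap)
      (fun a b => hdE b a) x y
  -- compute the interaction integral via FTC and symmetry
  have hint : (∫ s in (0:ℝ)..y, dE s x) = cD x y - cD x 0 := by
    have : (∫ s in (0:ℝ)..y, dE s x) = ∫ s in (0:ℝ)..y, dD x s := by
      simp_rw [hsym]
    rw [this]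
    exact intervalIntegral.integral_eq_sub_of_hasDerivAt (fun s _ => hdD x s)
      ((hdDc.comp (continuous_const.prodMk continuous_id)).intervalIntegrable _ _)
  rw [hFeq]
  have := hA'.add hG
  rw [hint] at this
  have e : (cD x y • ContinuousLinearMap.fst ℝ ℝ ℝ + cE y x • ContinuousLinearMap.snd ℝ ℝ ℝ : ℝ × ℝ →L[ℝ] ℝ) =
      cD x 0 • ContinuousLinearMap.fst ℝ ℝ ℝ +
        ((cD x y - cD x 0) • ContinuousLinearMap.fst ℝ ℝ ℝ + cE y x • ContinuousLinearMap.snd ℝ ℝ ℝ) := by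
    module
  rw [e]
  exact this
end

section
/- Let c_D, c_E : ℝ × ℝ → ℝ be jointly continuous, each differentiable in its second argument with jointly continuous partial derivative, and satisfying the symmetry condition ∂₂c_E(b, a) = ∂₂c_D(a, b) for all a, b ∈ ℝ. Define F(x,y) = ∫₀^{x} c_D(s, 0) ds + ∫₀^{y} c_E(s, x) ds. Then for any fixed (x, y) ∈ ℝ² and any direction (I_D, I_E) ∈ ℝ², the function g(t) = F(x + t·I_D, y + t·I_E) is differentiable in t, with g'(t) = I_D · c_D(x + t·I_D, y + t·I_E) + I_E · c_E(y + t·I_E, x + t·I_D). In particular, the derivative of the Beckmann objective with respect to a flow shift of size t equals the I-weighted sum of the link costs evaluated at the shifted flows. -/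
open MeasureTheory intervalIntegral Set Metric
open scoped Interval

/-- Derivative of the Beckmann objective along a flow shift in the presence of
symmetric link interactions: for `F(x,y) = ∫₀^x c_D(s,0) ds + ∫₀^y c_E(s,x) ds` and
direction `(I_D, I_E)`, the function `g(t) = F(x + t·I_D, y + t·I_E)` is differentiable
with `g'(t) = I_D·c_D(x + t·I_D, y + t·I_E) + I_E·c_E(y + t·I_E, x + t·I_D)`. -/
theorem beckmann_flow_shift_derivative_pair
    (cD cE dD dE : ℝ → ℝ → ℝ)
    (hcD : Continuous fun p : ℝ × ℝ => cD p.1 p.2)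
    (hcE : Continuous fun p : ℝ × ℝ => cE p.1 p.2)
    (hdD : ∀ a b : ℝ, HasDerivAt (fun t => cD a t) (dD a b) b)
    (hdE : ∀ a b : ℝ, HasDerivAt (fun t => cE a t) (dE a b) b)
    (hdDc : Continuous fun p : ℝ × ℝ => dD p.1 p.2)
    (hdEc : Continuous fun p : ℝ × ℝ => dE p.1 p.2)
    (hsym : ∀ a b : ℝ, dE b a = dD a b)
    (F : ℝ × ℝ → ℝ)
    (hF : ∀ p : ℝ × ℝ, F p =
      (∫ s in (0:ℝ)..p.1, cD s 0) + (∫ s in (0:ℝ)..p.2, cE s p.1)) :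
    ∀ x y ID IE t : ℝ,
      HasDerivAt (fun τ : ℝ => F (x + τ * ID, y + τ * IE))
        (ID * cD (x + t * ID) (y + t * IE) + IE * cE (y + t * IE) (x + t * ID)) t := by
  intro x y ID IE t
  -- continuity of one-variable slices
  have hcD1 : ∀ c : ℝ, Continuous fun s => cD s c := fun c =>
    hcD.comp (continuous_id.prodMk continuous_const)
  have hcE1 : ∀ c : ℝ, Continuous fun s => cE s c := fun c =>
    hcE.comp (continuous_id.prodMk continuous_const)
  have hdE1 : ∀ c : ℝ, Continuous fun s => dE s c := fun c =>
    hdEc.comp (continuous_id.prodMk continuous_const)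
  have hdE2 : ∀ s : ℝ, Continuous fun u => dE s u := fun s =>
    hdEc.comp (continuous_const.prodMk continuous_id)
  have hdD2 : ∀ a : ℝ, Continuous fun s => dD a s := fun a =>
    hdDc.comp (continuous_const.prodMk continuous_id)
  -- affine paths
  have hX : ∀ τ : ℝ, HasDerivAt (fun r : ℝ => x + r * ID) ID τ := fun τ => by
    simpa using ((hasDerivAt_id τ).mul_const ID).const_add x
  have hY : ∀ τ : ℝ, HasDerivAt (fun r : ℝ => y + r * IE) IE τ := fun τ => by
    simpa using ((hasDerivAt_id τ).mul_const IE).const_add y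
  -- FTC identities
  have ftcD : ∀ a b : ℝ, (∫ s in (0:ℝ)..b, dD a s) = cD a b - cD a 0 := fun a b =>
    integral_eq_sub_of_hasDerivAt (fun s _ => hdD a s) ((hdD2 a).intervalIntegrable _ _)
  -- a uniform bound for `dE` on a compact rectangle around the point of interest
  obtain ⟨M, hM⟩ : ∃ M : ℝ, ∀ p ∈
      ((uIcc (0:ℝ) (y + t * IE) ∪ Icc (y + t * IE - |IE|) (y + t * IE + |IE|)) ×ˢ
        Icc (x + t * ID - |ID|) (x + t * ID + |ID|)),
      ‖dE p.1 p.2‖ ≤ M := by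
    have hK : IsCompact ((uIcc (0:ℝ) (y + t * IE) ∪
        Icc (y + t * IE - |IE|) (y + t * IE + |IE|)) ×ˢ
        Icc (x + t * ID - |ID|) (x + t * ID + |ID|)) :=
      (isCompact_uIcc.union isCompact_Icc).prod isCompact_Icc
    exact hK.exists_bound_of_continuousOn hdEc.continuousOn
  have hM0 : 0 ≤ M := by
    have := hM (y + t * IE, x + t * ID) ⟨Or.inr ⟨by simp [abs_nonneg], by simp [abs_nonneg]⟩,
      ⟨by simp [abs_nonneg], by simp [abs_nonneg]⟩⟩
    exact le_trans (norm_nonneg _) this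
  -- membership helper: `x + τ*ID` stays in the rectangle for `|τ - t| ≤ 1`
  have hXmem : ∀ τ : ℝ, |τ - t| ≤ 1 →
      x + τ * ID ∈ Icc (x + t * ID - |ID|) (x + t * ID + |ID|) := by
    intro τ hτ
    have h1 : |x + τ * ID - (x + t * ID)| ≤ |ID| := by
      have he : x + τ * ID - (x + t * ID) = (τ - t) * ID := by ring
      rw [he, abs_mul]
      exact mul_le_of_le_one_left (abs_nonneg _) hτ
    have := abs_le.1 h1
    constructor <;> linarith [this.1, this.2]
  -- g₁ : the `cD` primitive along the path
  have h1 : HasDerivAt (fun τ : ℝ => ∫ u in (0:ℝ)..(x + τ * ID), cD u 0)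
      (cD (x + t * ID) 0 * ID) t := by
    have h1' : HasDerivAt (fun r : ℝ => ∫ u in (0:ℝ)..r, cD u 0)
        (cD (x + t * ID) 0) (x + t * ID) :=
      integral_hasDerivAt_right ((hcD1 0).intervalIntegrable _ _)
        ((hcD1 0).aestronglyMeasurable.stronglyMeasurableAtFilter)
        (hcD1 0).continuousAt
    exact h1'.comp t (hX t)
  -- g₂ : differentiation under the integral sign (fixed endpoints, moving parameter)
  have h2 : HasDerivAt (fun τ : ℝ => ∫ s in (0:ℝ)..(y + t * IE), cE s (x + τ * ID))
      (∫ s in (0:ℝ)..(y + t * IE), dE s (x + t * ID) * ID) t := by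
    have key := intervalIntegral.hasDerivAt_integral_of_dominated_loc_of_deriv_le
      (μ := volume) (F := fun τ s => cE s (x + τ * ID))
      (F' := fun τ s => dE s (x + τ * ID) * ID) (a := 0) (b := y + t * IE)
      (x₀ := t) (bound := fun _ => M * |ID|) (Metric.ball_mem_nhds t one_pos)
      (Filter.Eventually.of_forall fun τ => ((hcE1 _).aestronglyMeasurable).restrict)
      ((hcE1 _).intervalIntegrable _ _)
      (((hdE1 _).mul continuous_const).aestronglyMeasurable.restrict)
      (Filter.Eventually.of_forall ?_)
      (intervalIntegrable_const)
      (Filter.Eventually.of_forall ?_)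
    · exact key.2
    · -- bound
      intro s hs τ hτ
      have hs' : s ∈ uIcc (0:ℝ) (y + t * IE) := uIoc_subset_uIcc hs
      have hτ' : |τ - t| ≤ 1 := by
        rw [mem_ball, Real.dist_eq] at hτ; exact hτ.le
      have hb := hM (s, x + τ * ID) ⟨Or.inl hs', hXmem τ hτ'⟩
      have : ‖dE s (x + τ * ID) * ID‖ = ‖dE s (x + τ * ID)‖ * |ID| := by
        rw [norm_mul, Real.norm_eq_abs, Real.norm_eq_abs]
      rw [this]
      exact mul_le_mul_of_nonneg_right hb (abs_nonneg _)
    · -- differentiability in the parameter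
      intro s hs τ hτ
      exact (hdE s (x + τ * ID)).comp τ (hX τ)
  -- g₃ : moving endpoint, frozen parameter
  have h3 : HasDerivAt
      (fun τ : ℝ => ∫ s in (y + t * IE)..(y + τ * IE), cE s (x + t * ID))
      (cE (y + t * IE) (x + t * ID) * IE) t := by
    have h3' : HasDerivAt (fun r : ℝ => ∫ s in (y + t * IE)..r, cE s (x + t * ID))
        (cE (y + t * IE) (x + t * ID)) (y + t * IE) :=
      integral_hasDerivAt_right ((hcE1 _).intervalIntegrable _ _)
        ((hcE1 _).aestronglyMeasurable.stronglyMeasurableAtFilter)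
        (hcE1 _).continuousAt
    exact h3'.comp t (hY t)
  -- g₄ : second-order remainder term
  have h4 : HasDerivAt
      (fun τ : ℝ => ∫ s in (y + t * IE)..(y + τ * IE),
        (cE s (x + τ * ID) - cE s (x + t * ID))) 0 t := by
    rw [hasDerivAt_iff_isLittleO]
    have h0 : (∫ s in (y + t * IE)..(y + t * IE),
        (cE s (x + t * ID) - cE s (x + t * ID))) = 0 := by
      simp
    rw [Asymptotics.isLittleO_iff]
    intro c hc
    have hden : (0:ℝ) < M * |ID| * |IE| + 1 := by
      have : 0 ≤ M * |ID| * |IE| :=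
        mul_nonneg (mul_nonneg hM0 (abs_nonneg _)) (abs_nonneg _)
      linarith
    have hδpos : (0:ℝ) < min 1 (c / (M * |ID| * |IE| + 1)) :=
      lt_min one_pos (div_pos hc hden)
    filter_upwards [Metric.closedBall_mem_nhds t hδpos] with τ hτ
    rw [Metric.mem_closedBall, Real.dist_eq] at hτ
    have hτ1 : |τ - t| ≤ 1 := hτ.trans (min_le_left _ _)
    have hτ2 : |τ - t| ≤ c / (M * |ID| * |IE| + 1) := hτ.trans (min_le_right _ _)
    -- pointwise bound for the integrand
    have hYd : |y + τ * IE - (y + t * IE)| ≤ |IE| := by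
      have he : y + τ * IE - (y + t * IE) = (τ - t) * IE := by ring
      rw [he, abs_mul]
      exact mul_le_of_le_one_left (abs_nonneg _) hτ1
    have hsmem : ∀ s ∈ Ι (y + t * IE) (y + τ * IE),
        s ∈ Icc (y + t * IE - |IE|) (y + t * IE + |IE|) := by
      intro s hs
      have hs' := uIoc_subset_uIcc hs
      rw [Set.mem_uIcc] at hs'
      have h' := abs_le.1 hYd
      rcases hs' with ⟨h1', h2'⟩ | ⟨h1', h2'⟩ <;>
        exact ⟨by linarith [h'.1], by linarith [h'.2]⟩
    have hinner : ∀ s ∈ Ι (y + t * IE) (y + τ * IE),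
        ‖cE s (x + τ * ID) - cE s (x + t * ID)‖ ≤ M * (|ID| * |τ - t|) := by
      intro s hs
      have hfts : cE s (x + τ * ID) - cE s (x + t * ID)
          = ∫ u in (x + t * ID)..(x + τ * ID), dE s u :=
        (integral_eq_sub_of_hasDerivAt (fun u _ => hdE s u)
          ((hdE2 s).intervalIntegrable _ _)).symm
      rw [hfts]
      have hb : ∀ u ∈ Ι (x + t * ID) (x + τ * ID), ‖dE s u‖ ≤ M := by
        intro u hu
        have hu' := uIoc_subset_uIcc hu
        have hXd : |x + τ * ID - (x + t * ID)| ≤ |ID| := by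
          have he : x + τ * ID - (x + t * ID) = (τ - t) * ID := by ring
          rw [he, abs_mul]
          exact mul_le_of_le_one_left (abs_nonneg _) hτ1
        have humem : u ∈ Icc (x + t * ID - |ID|) (x + t * ID + |ID|) := by
          rw [Set.mem_uIcc] at hu'
          have h' := abs_le.1 hXd
          rcases hu' with ⟨h1', h2'⟩ | ⟨h1', h2'⟩ <;>
            exact ⟨by linarith [h'.1], by linarith [h'.2]⟩
        exact hM (s, u) ⟨Or.inr (hsmem s hs), humem⟩
      calc ‖∫ u in (x + t * ID)..(x + τ * ID), dE s u‖
          ≤ M * |x + τ * ID - (x + t * ID)| :=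
            intervalIntegral.norm_integral_le_of_norm_le_const hb
        _ = M * (|ID| * |τ - t|) := by
            have he : x + τ * ID - (x + t * ID) = (τ - t) * ID := by ring
            rw [he, abs_mul]; ring
    have hout : ‖∫ s in (y + t * IE)..(y + τ * IE),
        (cE s (x + τ * ID) - cE s (x + t * ID))‖
        ≤ M * (|ID| * |τ - t|) * |y + τ * IE - (y + t * IE)| :=
      intervalIntegral.norm_integral_le_of_norm_le_const hinner
    -- assemble the little-o estimate
    have hYabs : |y + τ * IE - (y + t * IE)| = |τ - t| * |IE| := by
      have he : y + τ * IE - (y + t * IE) = (τ - t) * IE := by ring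
      rw [he, abs_mul]
    have hfinal : M * (|ID| * |τ - t|) * (|τ - t| * |IE|) ≤ c * |τ - t| := by
      have hmul : |τ - t| * (M * |ID| * |IE| + 1) ≤ c :=
        (le_div_iff₀ hden).1 hτ2
      nlinarith [abs_nonneg (τ - t), abs_nonneg ID, abs_nonneg IE,
        mul_nonneg (mul_nonneg hM0 (abs_nonneg ID)) (abs_nonneg IE)]
    simp only [h0, smul_zero, sub_zero, Real.norm_eq_abs]
    calc |∫ s in (y + t * IE)..(y + τ * IE),
        (cE s (x + τ * ID) - cE s (x + t * ID))|
        ≤ M * (|ID| * |τ - t|) * |y + τ * IE - (y + t * IE)| := hout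
      _ = M * (|ID| * |τ - t|) * (|τ - t| * |IE|) := by rw [hYabs]
      _ ≤ c * |τ - t| := hfinal
  -- decomposition of the objective along the path
  have hfun : (fun τ : ℝ => F (x + τ * ID, y + τ * IE)) =
      fun τ : ℝ => (∫ u in (0:ℝ)..(x + τ * ID), cD u 0)
        + (∫ s in (0:ℝ)..(y + t * IE), cE s (x + τ * ID))
        + (∫ s in (y + t * IE)..(y + τ * IE), cE s (x + t * ID))
        + ∫ s in (y + t * IE)..(y + τ * IE),
            (cE s (x + τ * ID) - cE s (x + t * ID)) := by
    funext τ
    rw [hF]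
    have hsplit : (∫ s in (y + t * IE)..(y + τ * IE), cE s (x + t * ID))
        + (∫ s in (y + t * IE)..(y + τ * IE),
            (cE s (x + τ * ID) - cE s (x + t * ID)))
        = ∫ s in (y + t * IE)..(y + τ * IE), cE s (x + τ * ID) := by
      rw [← intervalIntegral.integral_add (g := fun s => cE s (x + τ * ID) - cE s (x + t * ID)) ((hcE1 _).intervalIntegrable _ _)
        (((hcE1 _).sub (hcE1 _)).intervalIntegrable _ _)]
      congr 1
      funext s
      ring
    have hadj : (∫ s in (0:ℝ)..(y + t * IE), cE s (x + τ * ID))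
        + (∫ s in (y + t * IE)..(y + τ * IE), cE s (x + τ * ID))
        = ∫ s in (0:ℝ)..(y + τ * IE), cE s (x + τ * ID) :=
      intervalIntegral.integral_add_adjacent_intervals
        ((hcE1 _).intervalIntegrable _ _) ((hcE1 _).intervalIntegrable _ _)
    simp only
    rw [add_assoc ((∫ u in (0:ℝ)..(x + τ * ID), cD u 0)
      + (∫ s in (0:ℝ)..(y + t * IE), cE s (x + τ * ID))), hsplit]
    rw [add_assoc, hadj]
  -- value identity
  have hval : ID * cD (x + t * ID) (y + t * IE) + IE * cE (y + t * IE) (x + t * ID)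
      = cD (x + t * ID) 0 * ID
        + (∫ s in (0:ℝ)..(y + t * IE), dE s (x + t * ID) * ID)
        + cE (y + t * IE) (x + t * ID) * IE + 0 := by
    have : (∫ s in (0:ℝ)..(y + t * IE), dE s (x + t * ID) * ID)
        = (∫ s in (0:ℝ)..(y + t * IE), dD (x + t * ID) s) * ID := by
      rw [← intervalIntegral.integral_mul_const]
      simp only [hsym]
    rw [this, ftcD]
    ring
  rw [hfun, hval]
  exact ((h1.add h2).add h3).add h4
end

section
/- Let ι and κ be finite index sets. For each i ∈ ι let c_i, d_i : ℝ × ℝ → ℝ be jointly continuous, differentiable in their second arguments with jointly continuous partial derivatives, satisfying the pairwise symmetry condition ∂₂d_i(a, b) = ∂₂c_i(b, a) for all a, b ∈ ℝ; for each k ∈ κ let e_k : ℝ → ℝ be continuous. Define F : (ι → ℝ) × (ι → ℝ) × (κ → ℝ) → ℝ by F(x, y, z) = Σ_{i∈ι} ∫₀^{x_i} c_i(s, 0) ds + Σ_{i∈ι} ∫₀^{y_i} d_i(s, x_i) ds + Σ_{k∈κ} ∫₀^{z_k} e_k(s) ds. Then all partial derivatives of F exist, and ∂F/∂x_i(x,y,z)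 = c_i(x_i, y_i), ∂F/∂y_i(x,y,z) = d_i(y_i, x_i), and ∂F/∂z_k(x,y,z) = e_k(z_k) for all i ∈ ι and k ∈ κ. -/
open MeasureTheory intervalIntegral

private lemma beckmann_ftc_cont (f : ℝ → ℝ) (hf : Continuous f) (b : ℝ) :
    HasDerivAt (fun u => ∫ s in (0:ℝ)..u, f s) (f b) b :=
  intervalIntegral.integral_hasDerivAt_right (hf.intervalIntegrable _ _)
    (hf.stronglyMeasurableAtFilter _ _) hf.continuousAt

private lemma beckmann_param_deriv (g g' : ℝ → ℝ → ℝ)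
    (hg : Continuous fun p : ℝ × ℝ => g p.1 p.2)
    (hg' : Continuous fun p : ℝ × ℝ => g' p.1 p.2)
    (hder : ∀ s t, HasDerivAt (fun u => g s u) (g' s t) t)
    (b t₀ : ℝ) :
    HasDerivAt (fun t => ∫ s in (0:ℝ)..b, g s t) (∫ s in (0:ℝ)..b, g' s t₀) t₀ := by
  obtain ⟨C, hC⟩ := ((isCompact_uIcc (a := (0:ℝ)) (b := b)).prod
      (isCompact_Icc (a := t₀ - 1) (b := t₀ + 1))).exists_bound_of_continuousOn
      hg'.continuousOn
  have hcont : ∀ t : ℝ, Continuous fun s => g s t := fun t =>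
    hg.comp (continuous_id.prodMk continuous_const)
  have hcont' : ∀ t : ℝ, Continuous fun s => g' s t := fun t =>
    hg'.comp (continuous_id.prodMk continuous_const)
  refine (intervalIntegral.hasDerivAt_integral_of_dominated_loc_of_deriv_le
    (F := fun t s => g s t) (F' := fun t s => g' s t) (bound := fun _ => C) (Metric.ball_mem_nhds t₀ one_pos)
    ?_ ?_ ?_ ?_ ?_ ?_).2
  · exact Filter.Eventually.of_forall fun t => ((hcont t).aestronglyMeasurable)
  · exact (hcont t₀).intervalIntegrable _ _
  · exact (hcont' t₀).aestronglyMeasurable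
  · filter_upwards with s hs t ht
    have h1 := abs_lt.1 (by simpa [Real.dist_eq] using Metric.mem_ball.1 ht)
    exact hC (s, t) ⟨Set.uIoc_subset_uIcc hs,
      Set.mem_Icc.2 ⟨by linarith [h1.1], by linarith [h1.2]⟩⟩
  · exact intervalIntegrable_const
  · filter_upwards with s _ t _ using hder s t

/-- Finite-family Beckmann potential: with paired interacting costs `c i`, `d i`
(own flow first, counterpart's flow second) satisfying the symmetry condition
`∂₂(d i)(a,b) = ∂₂(c i)(b,a)`, and separable costs `e k`, the potential
`F(x,y,z) = Σᵢ ∫₀^{xᵢ} cᵢ(s,0) ds + Σᵢ ∫₀^{yᵢ} dᵢ(s,xᵢ) ds + Σₖ ∫₀^{zₖ} eₖ(s) ds`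
has all partial derivatives, equal to the corresponding link costs. -/
theorem beckmann_potential_partials_finite_family
    {ι κ : Type*} [Fintype ι] [Fintype κ] [DecidableEq ι] [DecidableEq κ]
    (c d dc dd : ι → ℝ → ℝ → ℝ) (e : κ → ℝ → ℝ)
    (hc : ∀ i, Continuous fun p : ℝ × ℝ => c i p.1 p.2)
    (hd : ∀ i, Continuous fun p : ℝ × ℝ => d i p.1 p.2)
    (hdc : ∀ i (a b : ℝ), HasDerivAt (fun t => c i a t) (dc i a b) b)
    (hdd : ∀ i (a b : ℝ), HasDerivAt (fun t => d i a t) (dd i a b) b)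
    (hdcc : ∀ i, Continuous fun p : ℝ × ℝ => dc i p.1 p.2)
    (hddc : ∀ i, Continuous fun p : ℝ × ℝ => dd i p.1 p.2)
    (hsym : ∀ i (a b : ℝ), dd i a b = dc i b a)
    (he : ∀ k, Continuous (e k))
    (F : (ι → ℝ) → (ι → ℝ) → (κ → ℝ) → ℝ)
    (hF : ∀ (x y : ι → ℝ) (z : κ → ℝ), F x y z =
      (∑ i, ∫ s in (0:ℝ)..x i, c i s 0) +
      (∑ i, ∫ s in (0:ℝ)..y i, d i s (x i)) +
      (∑ k, ∫ s in (0:ℝ)..z k, e k s)) :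
    ∀ (x y : ι → ℝ) (z : κ → ℝ),
      (∀ i, HasDerivAt (fun t => F (Function.update x i t) y z)
        (c i (x i) (y i)) (x i)) ∧
      (∀ i, HasDerivAt (fun t => F x (Function.update y i t) z)
        (d i (y i) (x i)) (y i)) ∧
      (∀ k, HasDerivAt (fun t => F x y (Function.update z k t))
        (e k (z k)) (z k)) := by
  intro x y z
  refine ⟨?_, ?_, ?_⟩
  · -- x-derivative
    intro i
    have hfun : (fun t => F (Function.update x i t) y z) = fun t =>
        ((∑ j, ∫ s in (0:ℝ)..(Function.update x i t j), c j s 0) +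
        (∑ j, ∫ s in (0:ℝ)..y j, d j s (Function.update x i t j))) +
        (∑ k, ∫ s in (0:ℝ)..z k, e k s) := by
      funext t; rw [hF]
    rw [hfun]
    have h1 : HasDerivAt
        (fun t => ∑ j, ∫ s in (0:ℝ)..(Function.update x i t j), c j s 0)
        (∑ j, if j = i then c i (x i) 0 else 0) (x i) := by
      apply HasDerivAt.fun_sum
      intro j _
      by_cases hj : j = i
      · subst hj
        simp only [if_pos rfl, Function.update_self]
        exact beckmann_ftc_cont (fun s => c j s 0)
          ((hc j).comp (continuous_id.prodMk continuous_const)) (x j)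
      · simp only [Function.update_of_ne hj, if_neg hj]
        exact hasDerivAt_const _ _
    have h2 : HasDerivAt
        (fun t => ∑ j, ∫ s in (0:ℝ)..y j, d j s (Function.update x i t j))
        (∑ j, if j = i then (∫ s in (0:ℝ)..y i, dd i s (x i)) else 0) (x i) := by
      apply HasDerivAt.fun_sum
      intro j _
      by_cases hj : j = i
      · subst hj
        simp only [if_pos rfl]
        have := beckmann_param_deriv (fun s t => d j s t) (fun s t => dd j s t)
          (hd j) (hddc j) (fun s t => hdd j s t) (y j) (x j)
        simpa only [Function.update_self, if_true] using this
      · simp only [Function.update_of_ne hj, if_neg hj]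
        exact hasDerivAt_const _ _
    have hint : (∫ s in (0:ℝ)..y i, dd i s (x i)) = c i (x i) (y i) - c i (x i) 0 := by
      have heq : (∫ s in (0:ℝ)..y i, dd i s (x i)) =
          ∫ s in (0:ℝ)..y i, dc i (x i) s := by
        simp only [hsym]
      rw [heq]
      exact intervalIntegral.integral_eq_sub_of_hasDerivAt (fun s _ => hdc i (x i) s)
        (((hdcc i).comp (continuous_const.prodMk continuous_id)).intervalIntegrable _ _)
    have H := (h1.add h2).add_const (∑ k, ∫ s in (0:ℝ)..z k, e k s)
    simp only [Finset.sum_ite_eq' Finset.univ i, Finset.mem_univ, if_pos, if_true, hint] at H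
    refine H.congr_deriv ?_
    ring
  · -- y-derivative
    intro i
    have hfun : (fun t => F x (Function.update y i t) z) = fun t =>
        ((∑ j, ∫ s in (0:ℝ)..x j, c j s 0) +
        (∑ k, ∫ s in (0:ℝ)..z k, e k s)) +
        (∑ j, ∫ s in (0:ℝ)..(Function.update y i t j), d j s (x j)) := by
      funext t; rw [hF]; ring
    rw [hfun]
    have h2 : HasDerivAt
        (fun t => ∑ j, ∫ s in (0:ℝ)..(Function.update y i t j), d j s (x j))
        (∑ j, if j = i then d i (y i) (x i) else 0) (y i) := by
      apply HasDerivAt.fun_sum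
      intro j _
      by_cases hj : j = i
      · subst hj
        simp only [if_pos rfl, Function.update_self]
        exact beckmann_ftc_cont (fun s => d j s (x j))
          ((hd j).comp (continuous_id.prodMk continuous_const)) (y j)
      · simp only [Function.update_of_ne hj, if_neg hj]
        exact hasDerivAt_const _ _
    have H := h2.const_add ((∑ j, ∫ s in (0:ℝ)..x j, c j s 0) +
        (∑ k, ∫ s in (0:ℝ)..z k, e k s))
    simpa only [Finset.sum_ite_eq' Finset.univ i, Finset.mem_univ, if_pos] using H
  · -- z-derivative
    intro k
    have hfun : (fun t => F x y (Function.update z k t)) = fun t =>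
        ((∑ j, ∫ s in (0:ℝ)..x j, c j s 0) +
        (∑ j, ∫ s in (0:ℝ)..y j, d j s (x j))) +
        (∑ l, ∫ s in (0:ℝ)..(Function.update z k t l), e l s) := by
      funext t; rw [hF]
    rw [hfun]
    have h3 : HasDerivAt
        (fun t => ∑ l, ∫ s in (0:ℝ)..(Function.update z k t l), e l s)
        (∑ l, if l = k then e k (z k) else 0) (z k) := by
      apply HasDerivAt.fun_sum
      intro l _
      by_cases hl : l = k
      · subst hl
        simp only [if_pos rfl, Function.update_self]
        exact beckmann_ftc_cont (e l) (he l) (z l)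
      · simp only [Function.update_of_ne hl, if_neg hl]
        exact hasDerivAt_const _ _
    have H := h3.const_add ((∑ j, ∫ s in (0:ℝ)..x j, c j s 0) +
        (∑ j, ∫ s in (0:ℝ)..y j, d j s (x j)))
    simpa only [Finset.sum_ite_eq' Finset.univ k, Finset.mem_univ, if_pos] using H
end

section
/- Under the hypotheses of the finite-family Beckmann potential (finite index sets ι, κ; jointly continuous paired costs c_i, d_i with jointly continuous second-argument partial derivatives satisfying ∂₂d_i(a,b) = ∂₂c_i(b,a); continuous separable costs e_k), let F(x, y, z) = Σ_i ∫₀^{x_i} c_i(s, 0) ds + Σ_i ∫₀^{y_i} d_i(s, x_i) ds + Σ_k ∫₀^{z_k} e_k(s) ds, and let I^x, I^y : ι → ℝ and I^z : κ → ℝ be arbitrary direction vectors. Then the function g(t) = F(x + t·I^x, y + t·I^y, z + t·I^z) is differentiable in t, with g'(t) = Σ_{i∈ι} I^x_i · c_i(x_i + t·I^x_i, y_i + t·I^y_i) + Σ_{i∈ι} I^y_i · d_i(y_i + t·I^y_i, x_i + t·I^x_i) + Σ_{k∈κ} I^z_k · e_k(z_k + t·I^z_k). That is, dF/d(Δx)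 = Σ_a c_a(x + Δx) I_a, validating the Algorithm B flow shift in the presence of symmetric link interactions. -/
open MeasureTheory intervalIntegral Asymptotics Metric Filter

private lemma slice_ii {f : ℝ → ℝ → ℝ} (hf : Continuous fun p : ℝ × ℝ => f p.1 p.2)
    (b a₁ a₂ : ℝ) : IntervalIntegrable (fun u => f u b) volume a₁ a₂ :=
  (hf.comp (continuous_id.prodMk continuous_const)).intervalIntegrable a₁ a₂

/-- differentiation under the integral sign, fixed endpoints. -/
private lemma psi_deriv {f f' : ℝ → ℝ → ℝ}
    (hf : Continuous fun p : ℝ × ℝ => f p.1 p.2)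
    (hf'c : Continuous fun p : ℝ × ℝ => f' p.1 p.2)
    (hder : ∀ a b, HasDerivAt (fun t => f a t) (f' a b) b)
    (a₀ b₀ : ℝ) :
    HasDerivAt (fun b => ∫ u in (0:ℝ)..a₀, f u b) (∫ u in (0:ℝ)..a₀, f' u b₀) b₀ := by
  obtain ⟨M, hM⟩ : ∃ M, ∀ p ∈ (Set.uIcc (0:ℝ) a₀) ×ˢ Metric.closedBall b₀ 1,
      ‖f' p.1 p.2‖ ≤ M :=
    (isCompact_uIcc.prod (isCompact_closedBall b₀ 1)).exists_bound_of_continuousOn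
      hf'c.continuousOn
  refine (intervalIntegral.hasDerivAt_integral_of_dominated_loc_of_deriv_le
    (F := fun b u => f u b) (F' := fun b u => f' u b) (bound := fun _ => M)
    (s := Metric.ball b₀ 1) (Metric.ball_mem_nhds b₀ one_pos) ?_ ?_ ?_ ?_ ?_ ?_).2
  · exact Filter.Eventually.of_forall fun b =>
      ((hf.comp (continuous_id.prodMk continuous_const)).aestronglyMeasurable).restrict
  · exact slice_ii hf b₀ 0 a₀
  · exact ((hf'c.comp (continuous_id.prodMk continuous_const)).aestronglyMeasurable).restrict
  · refine Filter.Eventually.of_forall fun u hu b hb => ?_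
    exact hM (u, b) ⟨Set.uIoc_subset_uIcc hu, Metric.ball_subset_closedBall hb⟩
  · exact intervalIntegrable_const
  · exact Filter.Eventually.of_forall fun u _ b _ => hder u b

/-- Key lemma: joint differentiability of `(a,b) ↦ ∫ u in 0..a, f u b`. -/
private lemma key {f f' : ℝ → ℝ → ℝ}
    (hf : Continuous fun p : ℝ × ℝ => f p.1 p.2)
    (hf'c : Continuous fun p : ℝ × ℝ => f' p.1 p.2)
    (hder : ∀ a b, HasDerivAt (fun t => f a t) (f' a b) b)
    (a₀ b₀ : ℝ) :
    HasFDerivAt (fun p : ℝ × ℝ => ∫ u in (0:ℝ)..p.1, f u p.2)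
      ((f a₀ b₀) • (ContinuousLinearMap.fst ℝ ℝ ℝ) +
        (∫ u in (0:ℝ)..a₀, f' u b₀) • (ContinuousLinearMap.snd ℝ ℝ ℝ)) (a₀, b₀) := by
  set K := f a₀ b₀ with hK
  set P := ∫ u in (0:ℝ)..a₀, f' u b₀ with hP
  rw [hasFDerivAt_iff_isLittleO]
  have hsplit : ∀ p : ℝ × ℝ,
      (∫ u in (0:ℝ)..p.1, f u p.2) - (∫ u in (0:ℝ)..a₀, f u b₀)
        - (K * (p.1 - a₀) + P * (p.2 - b₀))
      = ((∫ u in (0:ℝ)..a₀, f u p.2) - (∫ u in (0:ℝ)..a₀, f u b₀) - (p.2 - b₀) * P)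
        + (∫ u in a₀..p.1, (f u p.2 - K)) := by
    intro p
    have h1 : (∫ u in (0:ℝ)..a₀, f u p.2) + (∫ u in a₀..p.1, f u p.2)
        = ∫ u in (0:ℝ)..p.1, f u p.2 :=
      intervalIntegral.integral_add_adjacent_intervals (slice_ii hf p.2 0 a₀)
        (slice_ii hf p.2 a₀ p.1)
    have h2 : ∫ u in a₀..p.1, (f u p.2 - K)
        = (∫ u in a₀..p.1, f u p.2) - (p.1 - a₀) * K := by
      rw [intervalIntegral.integral_sub (slice_ii hf p.2 a₀ p.1) intervalIntegrable_const,
        intervalIntegral.integral_const, smul_eq_mul]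
    rw [← h1, h2]; ring
  have h1o : (fun p : ℝ × ℝ =>
      (∫ u in (0:ℝ)..a₀, f u p.2) - (∫ u in (0:ℝ)..a₀, f u b₀) - (p.2 - b₀) * P)
      =o[nhds (a₀, b₀)] fun p => p - (a₀, b₀) := by
    have hψ := psi_deriv hf hf'c hder a₀ b₀
    have h1 := hasDerivAt_iff_isLittleO.mp hψ
    have h1' : (fun b => (∫ u in (0:ℝ)..a₀, f u b) - (∫ u in (0:ℝ)..a₀, f u b₀)
        - (b - b₀) * P) =o[nhds b₀] fun b => b - b₀ := by
      simpa [smul_eq_mul] using h1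
    have hsnd : Filter.Tendsto (fun p : ℝ × ℝ => p.2) (nhds (a₀, b₀)) (nhds b₀) :=
      continuous_snd.tendsto _
    exact (h1'.comp_tendsto hsnd).trans_isBigO
      (Asymptotics.isBigO_of_le _ fun p => by
        simpa using norm_snd_le (p - (a₀, b₀)))
  have h2o : (fun p : ℝ × ℝ => ∫ u in a₀..p.1, (f u p.2 - K))
      =o[nhds (a₀, b₀)] fun p => p - (a₀, b₀) := by
    rw [isLittleO_iff]
    intro ε hε
    obtain ⟨δ, hδ, hδ'⟩ := Metric.continuousAt_iff.mp
      (hf.continuousAt (x := (a₀, b₀))) ε hε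
    filter_upwards [Metric.ball_mem_nhds (a₀, b₀) hδ] with p hp
    have hbd : ∀ u ∈ Set.uIoc a₀ p.1, ‖f u p.2 - K‖ ≤ ε := by
      intro u hu
      have h1 : dist u a₀ ≤ dist p.1 a₀ := by
        have := Set.abs_sub_left_of_mem_uIcc (Set.uIoc_subset_uIcc hu)
        simpa [Real.dist_eq] using this
      have h2 : dist (u, p.2) (a₀, b₀) < δ := by
        simp only [Metric.mem_ball, Prod.dist_eq] at hp
        rw [Prod.dist_eq]
        exact lt_of_le_of_lt (max_le_max h1 le_rfl) hp
      exact le_of_lt (hδ' h2)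
    calc ‖∫ u in a₀..p.1, (f u p.2 - K)‖
        ≤ ε * |p.1 - a₀| := intervalIntegral.norm_integral_le_of_norm_le_const hbd
      _ ≤ ε * ‖p - (a₀, b₀)‖ := by
          refine mul_le_mul_of_nonneg_left ?_ (le_of_lt hε)
          calc |p.1 - a₀| = ‖(p - (a₀, b₀)).1‖ := by simp
            _ ≤ ‖p - (a₀, b₀)‖ := norm_fst_le _
  exact (h1o.add h2o).congr (fun p => (hsplit p).symm) (fun p => rfl)

/-- derivative along an affine line of `τ ↦ ∫ u in 0..(a+τp), f u (b+τq)`. -/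
private lemma key_line {f f' : ℝ → ℝ → ℝ}
    (hf : Continuous fun p : ℝ × ℝ => f p.1 p.2)
    (hf'c : Continuous fun p : ℝ × ℝ => f' p.1 p.2)
    (hder : ∀ a b, HasDerivAt (fun t => f a t) (f' a b) b)
    (a b p q t : ℝ) :
    HasDerivAt (fun τ => ∫ u in (0:ℝ)..(a + τ * p), f u (b + τ * q))
      (p * f (a + t * p) (b + t * q)
        + q * ∫ u in (0:ℝ)..(a + t * p), f' u (b + t * q)) t := by
  have hX : HasDerivAt (fun τ : ℝ => a + τ * p) p t := by
    simpa using ((hasDerivAt_id t).mul_const p).const_add a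
  have hY : HasDerivAt (fun τ : ℝ => b + τ * q) q t := by
    simpa using ((hasDerivAt_id t).mul_const q).const_add b
  have hγ : HasDerivAt (fun τ : ℝ => ((a + τ * p, b + τ * q) : ℝ × ℝ)) (p, q) t :=
    hX.prodMk hY
  have hΦ := key hf hf'c hder (a + t * p) (b + t * q)
  have h := hΦ.comp_hasDerivAt t hγ
  refine h.congr_deriv ?_
  simp [ContinuousLinearMap.add_apply, smul_eq_mul]
  ring

/-- Flow-shift derivative of the finite-family Beckmann objective: for direction
vectors `Iˣ, Iʸ : ι → ℝ` and `Iᶻ : κ → ℝ`, the function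
`g(t) = F(x + t·Iˣ, y + t·Iʸ, z + t·Iᶻ)` is differentiable with
`g'(t) = Σᵢ Iˣᵢ·cᵢ(xᵢ+t·Iˣᵢ, yᵢ+t·Iʸᵢ) + Σᵢ Iʸᵢ·dᵢ(yᵢ+t·Iʸᵢ, xᵢ+t·Iˣᵢ)
       + Σₖ Iᶻₖ·eₖ(zₖ+t·Iᶻₖ)`,
i.e. `dF/d(Δx) = Σₐ cₐ(x + Δx)·Iₐ`, validating the Algorithm B flow shift under
symmetric link interactions. -/
theorem beckmann_flow_shift_derivative_finite_family
    {ι κ : Type*} [Fintype ι] [Fintype κ]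
    (c d dc dd : ι → ℝ → ℝ → ℝ) (e : κ → ℝ → ℝ)
    (hc : ∀ i, Continuous fun p : ℝ × ℝ => c i p.1 p.2)
    (hd : ∀ i, Continuous fun p : ℝ × ℝ => d i p.1 p.2)
    (hdc : ∀ i (a b : ℝ), HasDerivAt (fun t => c i a t) (dc i a b) b)
    (hdd : ∀ i (a b : ℝ), HasDerivAt (fun t => d i a t) (dd i a b) b)
    (hdcc : ∀ i, Continuous fun p : ℝ × ℝ => dc i p.1 p.2)
    (hddc : ∀ i, Continuous fun p : ℝ × ℝ => dd i p.1 p.2)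
    (hsym : ∀ i (a b : ℝ), dd i a b = dc i b a)
    (he : ∀ k, Continuous (e k))
    (F : (ι → ℝ) → (ι → ℝ) → (κ → ℝ) → ℝ)
    (hF : ∀ (x y : ι → ℝ) (z : κ → ℝ), F x y z =
      (∑ i, ∫ s in (0:ℝ)..x i, c i s 0) +
      (∑ i, ∫ s in (0:ℝ)..y i, d i s (x i)) +
      (∑ k, ∫ s in (0:ℝ)..z k, e k s)) :
    ∀ (x y Ix Iy : ι → ℝ) (z Iz : κ → ℝ) (t : ℝ),
      HasDerivAt
        (fun τ : ℝ => F (fun i => x i + τ * Ix i) (fun i => y i + τ * Iy i)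
          (fun k => z k + τ * Iz k))
        ((∑ i, Ix i * c i (x i + t * Ix i) (y i + t * Iy i)) +
         (∑ i, Iy i * d i (y i + t * Iy i) (x i + t * Ix i)) +
         (∑ k, Iz k * e k (z k + t * Iz k))) t := by
  intro x y Ix Iy z Iz t
  set Xt : ι → ℝ := fun i => x i + t * Ix i with hXt
  set Yt : ι → ℝ := fun i => y i + t * Iy i with hYt
  set Zt : κ → ℝ := fun k => z k + t * Iz k with hZt
  have hFeq : (fun τ : ℝ => F (fun i => x i + τ * Ix i) (fun i => y i + τ * Iy i)
      (fun k => z k + τ * Iz k))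
      = fun τ : ℝ =>
        (∑ i, ∫ s in (0:ℝ)..(x i + τ * Ix i), c i s 0) +
        (∑ i, ∫ s in (0:ℝ)..(y i + τ * Iy i), d i s (x i + τ * Ix i)) +
        (∑ k, ∫ s in (0:ℝ)..(z k + τ * Iz k), e k s) := by
    funext τ; exact hF _ _ _
  rw [hFeq]
  -- first sum
  have H1 : HasDerivAt (fun τ : ℝ => ∑ i, ∫ s in (0:ℝ)..(x i + τ * Ix i), c i s 0)
      (∑ i, Ix i * c i (Xt i) 0) t := by
    refine HasDerivAt.fun_sum fun i _ => ?_
    have hcont : Continuous fun p : ℝ × ℝ => c i p.1 0 :=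
      (hc i).comp (continuous_fst.prodMk continuous_const)
    have := key_line (f := fun u _ => c i u 0) (f' := fun _ _ => 0)
      hcont continuous_const (fun a b => hasDerivAt_const b (c i a 0))
      (x i) 0 (Ix i) 0 t
    simpa using this
  -- second sum
  have H2 : HasDerivAt
      (fun τ : ℝ => ∑ i, ∫ s in (0:ℝ)..(y i + τ * Iy i), d i s (x i + τ * Ix i))
      (∑ i, (Iy i * d i (Yt i) (Xt i)
        + Ix i * (c i (Xt i) (Yt i) - c i (Xt i) 0))) t := by
    refine HasDerivAt.fun_sum fun i _ => ?_
    have hkey := key_line (f := d i) (f' := dd i) (hd i) (hddc i) (hdd i)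
      (y i) (x i) (Iy i) (Ix i) t
    have hint : (∫ s in (0:ℝ)..(y i + t * Iy i), dd i s (x i + t * Ix i))
        = c i (Xt i) (Yt i) - c i (Xt i) 0 := by
      have heq : (fun s => dd i s (x i + t * Ix i))
          = fun s => dc i (Xt i) s := by
        funext s; exact hsym i s (Xt i)
      rw [heq]
      have : ∫ s in (0:ℝ)..(y i + t * Iy i), dc i (Xt i) s
          = c i (Xt i) (Yt i) - c i (Xt i) 0 := by
        refine intervalIntegral.integral_eq_sub_of_hasDerivAt
          (fun s _ => hdc i (Xt i) s) ?_
        exact ((hdcc i).comp (continuous_const.prodMk continuous_id)).intervalIntegrable _ _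
      simpa [hYt] using this
    rw [hint] at hkey
    exact hkey
  -- third sum
  have H3 : HasDerivAt (fun τ : ℝ => ∑ k, ∫ s in (0:ℝ)..(z k + τ * Iz k), e k s)
      (∑ k, Iz k * e k (Zt k)) t := by
    refine HasDerivAt.fun_sum fun k _ => ?_
    have hcont : Continuous fun p : ℝ × ℝ => e k p.1 := (he k).comp continuous_fst
    have := key_line (f := fun u _ => e k u) (f' := fun _ _ => 0)
      hcont continuous_const (fun a b => hasDerivAt_const b (e k a))
      (z k) 0 (Iz k) 0 t
    simpa using this
  have H := (H1.add H2).add H3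
  refine H.congr_deriv ?_
  have : (∑ i, Ix i * c i (Xt i) (Yt i)) + (∑ i, Iy i * d i (Yt i) (Xt i))
      = (∑ i, Ix i * c i (Xt i) 0)
        + ∑ i, (Iy i * d i (Yt i) (Xt i) + Ix i * (c i (Xt i) (Yt i) - c i (Xt i) 0)) := by
    rw [← Finset.sum_add_distrib, ← Finset.sum_add_distrib]
    exact Finset.sum_congr rfl fun i _ => by ring
  rw [← this]
end

section
/- Under the hypotheses of the finite-family Beckmann potential (finite index sets ι, κ; jointly continuous paired costs c_i, d_i with jointly continuous second-argument partial derivatives satisfying ∂₂d_i(a,b) = ∂₂c_i(b,a); continuous separable costs e_k), let F(x, y, z) = Σ_i ∫₀^{x_i} c_i(s, 0) ds + Σ_i ∫₀^{y_i} d_i(s, x_i) ds + Σ_k ∫₀^{z_k} e_k(s) ds. Suppose the direction vectors I^x, I^y, I^z take values in {−1, 0, 1}, with L denoting the set of link indices whose coefficient is +1 and U the set whose coefficient is −1. Then the derivative of g(t) = F(x + t·I^x, y + t·I^y, z + t·I^z) at t = 0 equals the total cost of the links in L minus the total cost of the links in U, both evaluated at the flows (x, y, z) (where each paired link's cost is evaluated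 at its own flow first and its counterpart's flow second). Consequently, g'(0) = 0 if and only if the total cost along L equals the total cost along U; in particular, the flow shift that equalizes the costs of the longer and shorter path segments is a stationary point of the Beckmann objective. -/
open MeasureTheory intervalIntegral Metric

open MeasureTheory intervalIntegral Metric

/-- Differentiation under the integral sign for a jointly continuous integrand with
jointly continuous partial derivative in the parameter. -/
lemma beckmann_param_deriv_s8 (f f' : ℝ → ℝ → ℝ)
    (hf : Continuous fun p : ℝ × ℝ => f p.1 p.2)
    (hf'd : ∀ a b : ℝ, HasDerivAt (fun t => f a t) (f' a b) b)
    (hf'c : Continuous fun p : ℝ × ℝ => f' p.1 p.2)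
    (y x : ℝ) :
    HasDerivAt (fun v => ∫ s in (0:ℝ)..y, f s v) (∫ s in (0:ℝ)..y, f' s x) x := by
  obtain ⟨C, hC⟩ : ∃ C, ∀ p ∈ (Set.uIcc (0:ℝ) y) ×ˢ (closedBall x 1),
      ‖f' p.1 p.2‖ ≤ C :=
    ((isCompact_uIcc.prod (isCompact_closedBall x 1))).exists_bound_of_continuousOn
      hf'c.continuousOn
  have hcont : ∀ v : ℝ, Continuous fun s => f s v := fun v =>
    hf.comp (continuous_id.prodMk continuous_const)
  have hcont' : Continuous fun s => f' s x :=
    hf'c.comp (continuous_id.prodMk continuous_const)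
  have := intervalIntegral.hasDerivAt_integral_of_dominated_loc_of_deriv_le
    (F := fun v s => f s v) (F' := fun v s => f' s v) (x₀ := x) (a := 0) (b := y)
    (μ := volume) (bound := fun _ => C) (ball_mem_nhds x one_pos)
    (Filter.Eventually.of_forall fun v => ((hcont v).aestronglyMeasurable).restrict)
    ((hcont x).intervalIntegrable 0 y)
    ((hf'c.comp (continuous_id.prodMk continuous_const)).aestronglyMeasurable).restrict
    (Filter.Eventually.of_forall fun s hs v hv =>
      hC (s, v) ⟨Set.uIoc_subset_uIcc hs, ball_subset_closedBall hv⟩)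
    (intervalIntegrable_const)
    (Filter.Eventually.of_forall fun s _ v _ => hf'd s v)
  exact this.2

/-- Derivative of the moving-endpoint piece. -/
lemma beckmann_endpoint_deriv (f : ℝ → ℝ → ℝ)
    (hf : Continuous fun p : ℝ × ℝ => f p.1 p.2)
    (y x Iy Ix : ℝ) :
    HasDerivAt (fun t => ∫ s in y..(y + t * Iy), f s (x + t * Ix)) (Iy * f y x) 0 := by
  rw [hasDerivAt_iff_isLittleO, Asymptotics.isLittleO_iff]
  intro ε hε
  have hS : (0:ℝ) < |Iy| + |Ix| + 1 := by positivity
  set ε' : ℝ := ε / (|Iy| + 1) with hε'def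
  have hε' : 0 < ε' := by positivity
  obtain ⟨δ, hδ, hδf⟩ := Metric.continuousAt_iff.mp (hf.continuousAt (x := (y, x))) ε' hε'
  filter_upwards [eventually_abs_sub_lt 0 (div_pos hδ hS)] with t ht
  rw [sub_zero] at ht
  have htI : |t| * (|Iy| + |Ix| + 1) < δ := by
    rw [← lt_div_iff₀ hS]; exact ht
  have htIy : |t * Iy| < δ := by
    rw [abs_mul]; refine lt_of_le_of_lt ?_ htI
    nlinarith [abs_nonneg t, abs_nonneg Iy, abs_nonneg Ix]
  have htIx : |t * Ix| < δ := by
    rw [abs_mul]; refine lt_of_le_of_lt ?_ htI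
    nlinarith [abs_nonneg t, abs_nonneg Iy, abs_nonneg Ix]
  have hbound : ∀ s ∈ Set.uIoc y (y + t * Iy),
      ‖f s (x + t * Ix) - f y x‖ ≤ ε' := by
    intro s hs
    have hsy : |s - y| ≤ |t * Iy| := by
      rcases le_total 0 (t * Iy) with h | h
      · rw [Set.uIoc_of_le (by linarith)] at hs
        rw [abs_of_nonneg h, abs_le]; constructor <;> linarith [hs.1, hs.2]
      · rw [Set.uIoc_of_ge (by linarith)] at hs
        rw [abs_of_nonpos h, abs_le]; constructor <;> linarith [hs.1, hs.2]
    have hd : dist ((s, x + t * Ix) : ℝ × ℝ) (y, x) < δ := by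
      rw [Prod.dist_eq]
      apply max_lt
      · exact lt_of_le_of_lt (by simpa [Real.dist_eq] using hsy) htIy
      · rw [Real.dist_eq, show x + t * Ix - x = t * Ix by ring]; exact htIx
    have := hδf hd
    rw [Real.dist_eq] at this
    exact le_of_lt this
  have hint1 : IntervalIntegrable (fun s => f s (x + t * Ix)) volume y (y + t * Iy) :=
    ((hf.comp (continuous_id.prodMk continuous_const)).intervalIntegrable _ _)
  have key : (∫ s in y..(y + t * Iy), f s (x + t * Ix)) - t * (Iy * f y x)
      = ∫ s in y..(y + t * Iy), (f s (x + t * Ix) - f y x) := by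
    rw [intervalIntegral.integral_sub hint1 intervalIntegrable_const,
      intervalIntegral.integral_const, smul_eq_mul]
    ring
  have hnorm := intervalIntegral.norm_integral_le_of_norm_le_const hbound
  calc ‖(∫ s in y..(y + t * Iy), f s (x + t * Ix)) -
        (∫ s in y..(y + 0 * Iy), f s (x + 0 * Ix)) - (t - 0) • (Iy * f y x)‖
      = ‖(∫ s in y..(y + t * Iy), f s (x + t * Ix)) - t * (Iy * f y x)‖ := by
        norm_num
    _ = ‖∫ s in y..(y + t * Iy), (f s (x + t * Ix) - f y x)‖ := by rw [key]
    _ ≤ ε' * |y + t * Iy - y| := hnorm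
    _ = ε' * (|t| * |Iy|) := by rw [show y + t * Iy - y = t * Iy by ring, abs_mul]
    _ ≤ ε * ‖t - 0‖ := by
        rw [sub_zero, Real.norm_eq_abs]
        have h1 : ε' * |Iy| ≤ ε := by
          rw [hε'def, div_mul_eq_mul_div, div_le_iff₀ (by positivity)]
          nlinarith [abs_nonneg Iy, le_of_lt hε]
        nlinarith [abs_nonneg t, abs_nonneg Iy, hε'.le]

/-- Combined: derivative of `t ↦ ∫₀^{y+t·Iy} f(s, x+t·Ix) ds` at `t = 0`. -/
lemma beckmann_key (f f' : ℝ → ℝ → ℝ)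
    (hf : Continuous fun p : ℝ × ℝ => f p.1 p.2)
    (hf'd : ∀ a b : ℝ, HasDerivAt (fun t => f a t) (f' a b) b)
    (hf'c : Continuous fun p : ℝ × ℝ => f' p.1 p.2)
    (y x Iy Ix : ℝ) :
    HasDerivAt (fun t => ∫ s in (0:ℝ)..(y + t * Iy), f s (x + t * Ix))
      (Iy * f y x + Ix * ∫ s in (0:ℝ)..y, f' s x) 0 := by
  have hcont : ∀ v : ℝ, Continuous fun s => f s v := fun v =>
    hf.comp (continuous_id.prodMk continuous_const)
  have hline : HasDerivAt (fun t : ℝ => x + t * Ix) Ix 0 := by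
    simpa using ((hasDerivAt_id (0:ℝ)).mul_const Ix).const_add x
  have hA1 : HasDerivAt (fun v => ∫ s in (0:ℝ)..y, f s v)
      (∫ s in (0:ℝ)..y, f' s x) ((fun t : ℝ => x + t * Ix) 0) := by
    simpa using beckmann_param_deriv_s8 f f' hf hf'd hf'c y x
  have hA : HasDerivAt (fun t => ∫ s in (0:ℝ)..y, f s (x + t * Ix))
      ((∫ s in (0:ℝ)..y, f' s x) * Ix) 0 := by have := hA1.comp 0 hline; exact this
  have hB := beckmann_endpoint_deriv f hf y x Iy Ix
  have heq : (fun t => ∫ s in (0:ℝ)..(y + t * Iy), f s (x + t * Ix))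
      = fun t => (∫ s in (0:ℝ)..y, f s (x + t * Ix))
        + ∫ s in y..(y + t * Iy), f s (x + t * Ix) := by
    funext t
    exact (intervalIntegral.integral_add_adjacent_intervals
      ((hcont _).intervalIntegrable _ _) ((hcont _).intervalIntegrable _ _)).symm
  rw [heq]
  convert hA.fun_add hB using 1
  · rfl
  · rfl
  · ring

open Finset in
lemma beckmann_signed_sum {ι : Type*} [Fintype ι] [DecidableEq ι] (a w : ι → ℝ)
    (ha : ∀ i, a i = -1 ∨ a i = 0 ∨ a i = 1) :
    ∑ i, a i * w i = (∑ i ∈ univ.filter fun i => a i = 1, w i)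
      - (∑ i ∈ univ.filter fun i => a i = -1, w i) := by
  rw [Finset.sum_filter, Finset.sum_filter, ← Finset.sum_sub_distrib]
  refine Finset.sum_congr rfl fun i _ => ?_
  rcases ha i with h | h | h <;> rw [h] <;> norm_num


open Finset in
/-- Stationarity of the Algorithm B flow shift: with direction coefficients in
`{-1, 0, 1}` (`+1` on the shorter segment `L`, `-1` on the longer segment `U`),
the derivative of `g(t) = F(x + t·Iˣ, y + t·Iʸ, z + t·Iᶻ)` at `t = 0` equals the total
cost of the links in `L` minus the total cost of the links in `U`, evaluated at
`(x,y,z)` (each paired cost takes its own flow first, the counterpart's second).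
Consequently `g'(0) = 0` iff the total cost along `L` equals the total cost along `U`,
so the cost-equalizing flow shift is a stationary point of the Beckmann objective. -/
theorem beckmann_flow_shift_stationarity
    {ι κ : Type*} [Fintype ι] [Fintype κ] [DecidableEq ι] [DecidableEq κ]
    (c d dc dd : ι → ℝ → ℝ → ℝ) (e : κ → ℝ → ℝ)
    (hc : ∀ i, Continuous fun p : ℝ × ℝ => c i p.1 p.2)
    (hd : ∀ i, Continuous fun p : ℝ × ℝ => d i p.1 p.2)
    (hdc : ∀ i (a b : ℝ), HasDerivAt (fun t => c i a t) (dc i a b) b)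
    (hdd : ∀ i (a b : ℝ), HasDerivAt (fun t => d i a t) (dd i a b) b)
    (hdcc : ∀ i, Continuous fun p : ℝ × ℝ => dc i p.1 p.2)
    (hddc : ∀ i, Continuous fun p : ℝ × ℝ => dd i p.1 p.2)
    (hsym : ∀ i (a b : ℝ), dd i a b = dc i b a)
    (he : ∀ k, Continuous (e k))
    (F : (ι → ℝ) → (ι → ℝ) → (κ → ℝ) → ℝ)
    (hF : ∀ (x y : ι → ℝ) (z : κ → ℝ), F x y z =
      (∑ i, ∫ s in (0:ℝ)..x i, c i s 0) +
      (∑ i, ∫ s in (0:ℝ)..y i, d i s (x i)) +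
      (∑ k, ∫ s in (0:ℝ)..z k, e k s))
    (x y Ix Iy : ι → ℝ) (z Iz : κ → ℝ)
    (hIx : ∀ i, Ix i = -1 ∨ Ix i = 0 ∨ Ix i = 1)
    (hIy : ∀ i, Iy i = -1 ∨ Iy i = 0 ∨ Iy i = 1)
    (hIz : ∀ k, Iz k = -1 ∨ Iz k = 0 ∨ Iz k = 1)
    (g : ℝ → ℝ)
    (hg : ∀ t : ℝ, g t = F (fun i => x i + t * Ix i) (fun i => y i + t * Iy i)
      (fun k => z k + t * Iz k))
    (CL CU : ℝ)
    (hCL : CL = (∑ i ∈ univ.filter fun i => Ix i = 1, c i (x i) (y i)) +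
                (∑ i ∈ univ.filter fun i => Iy i = 1, d i (y i) (x i)) +
                (∑ k ∈ univ.filter fun k => Iz k = 1, e k (z k)))
    (hCU : CU = (∑ i ∈ univ.filter fun i => Ix i = -1, c i (x i) (y i)) +
                (∑ i ∈ univ.filter fun i => Iy i = -1, d i (y i) (x i)) +
                (∑ k ∈ univ.filter fun k => Iz k = -1, e k (z k))) :
    HasDerivAt g (CL - CU) 0 ∧ (deriv g 0 = 0 ↔ CL = CU) := by
  classical
  have hgfun : g = fun t =>
      (∑ i, ∫ s in (0:ℝ)..(x i + t * Ix i), c i s 0) +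
      (∑ i, ∫ s in (0:ℝ)..(y i + t * Iy i), d i s (x i + t * Ix i)) +
      (∑ k, ∫ s in (0:ℝ)..(z k + t * Iz k), e k s) := funext fun t => by rw [hg, hF]
  have h1 : ∀ i : ι, HasDerivAt (fun t => ∫ s in (0:ℝ)..(x i + t * Ix i), c i s 0)
      (Ix i * c i (x i) 0) 0 := by
    intro i
    have := beckmann_key (fun s _ => c i s 0) (fun _ _ => 0)
      ((hc i).comp (continuous_fst.prodMk continuous_const))
      (fun a b => hasDerivAt_const b (c i a 0)) continuous_const (x i) 0 (Ix i) 0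
    simpa using this
  have h2 : ∀ i : ι, HasDerivAt
      (fun t => ∫ s in (0:ℝ)..(y i + t * Iy i), d i s (x i + t * Ix i))
      (Iy i * d i (y i) (x i) + Ix i * ∫ s in (0:ℝ)..y i, dd i s (x i)) 0 :=
    fun i => beckmann_key (d i) (dd i) (hd i) (hdd i) (hddc i) (y i) (x i) (Iy i) (Ix i)
  have h3 : ∀ k : κ, HasDerivAt (fun t => ∫ s in (0:ℝ)..(z k + t * Iz k), e k s)
      (Iz k * e k (z k)) 0 := by
    intro k
    have := beckmann_key (fun s _ => e k s) (fun _ _ => 0)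
      ((he k).comp continuous_fst) (fun a b => hasDerivAt_const b (e k a)) continuous_const
      (z k) 0 (Iz k) 0
    simpa using this
  have hftc : ∀ i : ι, (∫ s in (0:ℝ)..y i, dd i s (x i))
      = c i (x i) (y i) - c i (x i) 0 := by
    intro i
    simp only [hsym]
    exact intervalIntegral.integral_eq_sub_of_hasDerivAt (fun s _ => hdc i (x i) s)
      (((hdcc i).comp (continuous_const.prodMk continuous_id)).intervalIntegrable _ _)
  have hD : HasDerivAt g
      ((∑ i, Ix i * c i (x i) 0) +
       (∑ i, (Iy i * d i (y i) (x i) + Ix i * (c i (x i) (y i) - c i (x i) 0))) +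
       (∑ k, Iz k * e k (z k))) 0 := by
    rw [hgfun]
    refine (HasDerivAt.add (HasDerivAt.add ?_ ?_) ?_)
    · exact HasDerivAt.fun_sum fun i _ => h1 i
    · exact HasDerivAt.fun_sum fun i _ => (hftc i) ▸ h2 i
    · exact HasDerivAt.fun_sum fun k _ => h3 k
  have hval : (∑ i, Ix i * c i (x i) 0) +
      (∑ i, (Iy i * d i (y i) (x i) + Ix i * (c i (x i) (y i) - c i (x i) 0))) +
      (∑ k, Iz k * e k (z k)) = CL - CU := by
    have hx := beckmann_signed_sum Ix (fun i => c i (x i) (y i)) hIx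
    have hy := beckmann_signed_sum Iy (fun i => d i (y i) (x i)) hIy
    have hz := beckmann_signed_sum Iz (fun k => e k (z k)) hIz
    have hcomb : (∑ i, Ix i * c i (x i) 0) +
        (∑ i, (Iy i * d i (y i) (x i) + Ix i * (c i (x i) (y i) - c i (x i) 0)))
        = (∑ i, Ix i * c i (x i) (y i)) + ∑ i, Iy i * d i (y i) (x i) := by
      rw [← Finset.sum_add_distrib, ← Finset.sum_add_distrib]
      exact Finset.sum_congr rfl fun i _ => by ring
    rw [hCL, hCU]
    linarith [hx, hy, hz, hcomb]
  have hD' : HasDerivAt g (CL - CU) 0 := hval ▸ hD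
  refine ⟨hD', ?_⟩
  rw [hD'.deriv]
  exact sub_eq_zero
end
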